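/- Let K be a finitely generated subgroup of the free group F_A with Stallings automaton S(K) = (Q, A, δ, q₀), and let k ≥ 1. The following are equivalent: (i) every subgroup (group H-class) of the transition monoid M(K) satisfies x^k = 1; (ii) for all q ∈ Q, all words v over Ã, and all n ≥ 1, if v^n labels a loop at q then v^{gcd(k,n)} labels a loop at q; (iii) for all x ∈ F_A and n ≥ 1, x^n ∈ K implies x^{gcd(k,n)} ∈ K. -/

import Mathlib

/-- Reading a word over `Ã = A × Bool` from a state of a partial deterministic automaton. -/
def readWord {Q A : Type} (δ : Q → A × Bool → Option Q) : Q → List (A × Bool) → Option Q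
  | q, [] => some q
  | q, x :: w =>
    match δ q x with
    | none => none
    | some q' => readWord δ q' w

/-- The `n`-th power of a word. -/
def wpow {α : Type} (w : List α) (n : ℕ) : List α := (List.replicate n w).flatten

/-- Domain of the partial transformation `δ_w`. -/
def pdom {Q A : Type} (δ : Q → A × Bool → Option Q) (w : List (A × Bool)) : Set Q :=
  {q | (readWord δ q w).isSome}

/-- Image of the partial transformation `δ_w`. -/
def pim {Q A : Type} (δ : Q → A × Bool → Option Q) (w : List (A × Bool)) : Set Q :=
  {q | ∃ p, readWord δ p w = some q}

/-!
Every `δ_v` of an inverse automaton is a partial injection of the finite set `Q`, so a state in the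
domain of `δ_{v^J}` with `J ≥ |Q|` lies on a `δ_v`-cycle, and `δ_{v^J}` then lies in a group
`H`-class. Taking such a `J` coprime to `n` links (i) and (ii), since the exponents `m` for which
`v^m` labels a loop at `q` are closed under `gcd`. For (ii) ⇔ (iii), write the reduced form of `x`
as `u y u⁻¹` with `y` cyclically reduced: the reduced form of `x^n` is `u y^n u⁻¹`, so `x^n ∈ K` iff
`y^n` labels a loop at the end of the path `u`. Conversely a loop `v^n` at `q` is carried to `q₀`
by conjugating with a path from `q₀` to `q`; in an inverse automaton, two words that are readable
from the same state and equal in `F_A` end at the same state (both read their common reduction).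
-/

open FreeGroup

section Reading

variable {A Q : Type} (δ : Q → A × Bool → Option Q)

theorem readWord_cons (q : Q) (x : A × Bool) (w : List (A × Bool)) :
    readWord δ q (x :: w) = (δ q x).bind (readWord δ · w) := by
  simp only [readWord]; cases δ q x <;> rfl

theorem readWord_singleton (q : Q) (x : A × Bool) : readWord δ q [x] = δ q x := by
  rw [readWord_cons]; cases δ q x <;> rfl

theorem readWord_append (q : Q) (w₁ w₂ : List (A × Bool)) :
    readWord δ q (w₁ ++ w₂) = (readWord δ q w₁).bind (readWord δ · w₂) := by
  induction w₁ generalizing q with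
  | nil => rfl
  | cons x w ih => simp only [List.cons_append, readWord_cons, Option.bind_assoc, ih]

theorem wpow_one {α : Type} (w : List α) : wpow w 1 = w := by
  simp [wpow]

theorem wpow_add {α : Type} (w : List α) (m n : ℕ) :
    wpow w (m + n) = wpow w m ++ wpow w n := by
  simp only [wpow, List.replicate_add, List.flatten_append]

theorem wpow_mul {α : Type} (w : List α) (m n : ℕ) :
    wpow w (m * n) = wpow (wpow w m) n := by
  induction n with
  | zero => rfl
  | succ n ih => rw [Nat.mul_succ, wpow_add, ih, wpow_add, wpow_one]

theorem readWord_wpow_add (q : Q) (v : List (A × Bool)) (m n : ℕ) :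
    readWord δ q (wpow v (m + n)) = (readWord δ q (wpow v m)).bind (readWord δ · (wpow v n)) := by
  rw [wpow_add, readWord_append]

variable {δ}

theorem readWord_wpow_of_loop {q : Q} {w : List (A × Bool)} (h : readWord δ q w = some q)
    (n : ℕ) : readWord δ q (wpow w n) = some q := by
  induction n with
  | zero => rfl
  | succ n ih => rw [readWord_wpow_add, ih, Option.bind_some, wpow_one, h]

theorem readWord_wpow_mul_of_loop {q : Q} {v : List (A × Bool)} {m : ℕ}
    (h : readWord δ q (wpow v m) = some q) (t : ℕ) : readWord δ q (wpow v (m * t)) = some q := by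
  rw [wpow_mul]; exact readWord_wpow_of_loop h t

theorem readWord_wpow_add_of_loop {q : Q} {v : List (A × Bool)} {m : ℕ}
    (h : readWord δ q (wpow v m) = some q) (n : ℕ) :
    readWord δ q (wpow v (m + n)) = readWord δ q (wpow v n) := by
  rw [readWord_wpow_add, h, Option.bind_some]

theorem readWord_wpow_gcd {q : Q} {v : List (A × Bool)} {a b : ℕ}
    (ha : readWord δ q (wpow v a) = some q) (hb : readWord δ q (wpow v b) = some q) :
    readWord δ q (wpow v (Nat.gcd a b)) = some q := by
  induction a, b using Nat.gcd.induction with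
  | H0 n => simpa using hb
  | H1 m n _ ih =>
    rw [Nat.gcd_rec]
    refine ih ?_ ha
    rw [← readWord_wpow_add_of_loop (readWord_wpow_mul_of_loop ha (n / m)), Nat.div_add_mod]
    exact hb

theorem pdom_wpow_antitone (v : List (A × Bool)) : Antitone fun n => pdom δ (wpow v n) := by
  intro i j hij q hq
  obtain ⟨r, hr⟩ := Option.isSome_iff_exists.mp hq
  rw [← Nat.add_sub_cancel' hij, readWord_wpow_add, Option.bind_eq_some_iff] at hr
  obtain ⟨s, hs, -⟩ := hr
  simp [pdom, hs]

theorem mem_pdom_wpow_of_loop {q : Q} {v : List (A × Bool)} {n : ℕ} (hn : 1 ≤ n)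
    (h : readWord δ q (wpow v n) = some q) (m : ℕ) : q ∈ pdom δ (wpow v m) :=
  pdom_wpow_antitone v (Nat.le_mul_of_pos_left m hn) (by simp [pdom, readWord_wpow_mul_of_loop h])

theorem pdom_subset_pdom_wpow {w : List (A × Bool)} (hw : pdom δ w = pim δ w) (m : ℕ) :
    pdom δ w ⊆ pdom δ (wpow w m) := by
  induction m with
  | zero => intro q _; rfl
  | succ m ih =>
    intro q hq
    obtain ⟨r, hr⟩ := Option.isSome_iff_exists.mp hq
    have hr' : r ∈ pdom δ (wpow w m) := ih (hw ▸ ⟨q, hr⟩)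
    simpa [pdom, add_comm m, readWord_wpow_add, wpow_one, hr] using hr'

end Reading

def IsInverse {A Q : Type} (δ : Q → A × Bool → Option Q) : Prop :=
  ∀ (p q : Q) (a : A) (b : Bool), δ p (a, b) = some q ↔ δ q (a, !b) = some p

namespace IsInverse

variable {A Q : Type} {δ : Q → A × Bool → Option Q}

theorem readWord_invRev (hδ : IsInverse δ) (w : List (A × Bool)) (p q : Q) :
    readWord δ q (invRev w) = some p ↔ readWord δ p w = some q := by
  induction w generalizing p q with
  | nil => simp [readWord, eq_comm]
  | cons x w ih =>
    obtain ⟨a, b⟩ := x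
    rw [invRev_cons, show invRev [(a, b)] = [(a, !b)] from rfl, readWord_append]
    simp only [readWord_singleton]
    simp only [readWord_cons, Option.bind_eq_some_iff, ih]
    constructor
    · rintro ⟨r, hr, hp⟩
      exact ⟨r, (hδ p r a b).mpr hp, hr⟩
    · rintro ⟨r, hp, hr⟩
      exact ⟨r, hr, (hδ p r a b).mp hp⟩

theorem eq_of_readWord_eq (hδ : IsInverse δ) {w : List (A × Bool)} {p₁ p₂ q : Q}
    (h₁ : readWord δ p₁ w = some q) (h₂ : readWord δ p₂ w = some q) : p₁ = p₂ :=
  Option.some_inj.mp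
    (((hδ.readWord_invRev w p₁ q).mpr h₁).symm.trans ((hδ.readWord_invRev w p₂ q).mpr h₂))

theorem readWord_of_red (hδ : IsInverse δ) {w w' : List (A × Bool)} (hr : Red w w') {p q : Q}
    (h : readWord δ p w = some q) : readWord δ p w' = some q := by
  induction hr with
  | refl => exact h
  | tail _ hstep ih =>
    obtain @⟨L₁, L₂, a, b⟩ := hstep
    rw [readWord_append, Option.bind_eq_some_iff] at ih ⊢
    obtain ⟨r, hr, hL⟩ := ih
    simp only [readWord_cons, Option.bind_eq_some_iff] at hL
    obtain ⟨s, hs, t, ht, hL₂⟩ := hL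
    obtain rfl : t = r := Option.some_inj.mp (ht.symm.trans ((hδ r s a b).mp hs))
    exact ⟨t, hr, hL₂⟩

theorem readWord_eq_of_mk_eq (hδ : IsInverse δ) {w₁ w₂ : List (A × Bool)} {p q₁ q₂ : Q}
    (hmk : mk w₁ = mk w₂) (h₁ : readWord δ p w₁ = some q₁) (h₂ : readWord δ p w₂ = some q₂) :
    q₁ = q₂ := by
  obtain ⟨w, hw₁, hw₂⟩ := Red.exact.mp hmk
  exact Option.some_inj.mp ((hδ.readWord_of_red hw₁ h₁).symm.trans (hδ.readWord_of_red hw₂ h₂))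

theorem readWord_conj_eq_self_iff (hδ : IsInverse δ) {u w : List (A × Bool)} {q₀ : Q} :
    readWord δ q₀ (u ++ w ++ invRev u) = some q₀ ↔
      ∃ p, readWord δ q₀ u = some p ∧ readWord δ p w = some p := by
  simp only [readWord_append, Option.bind_eq_some_iff]
  constructor
  · rintro ⟨p', ⟨p, hu, hw⟩, hu'⟩
    obtain rfl : p = p' := Option.some_inj.mp (hu.symm.trans ((hδ.readWord_invRev u q₀ p').mp hu'))
    exact ⟨p, hu, hw⟩
  · rintro ⟨p, hu, hw⟩
    exact ⟨p, ⟨p, hu, hw⟩, (hδ.readWord_invRev u q₀ p).mpr hu⟩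

theorem exists_loop_of_mem_pdom [Fintype Q] (hδ : IsInverse δ) {v : List (A × Bool)} {J : ℕ}
    (hJ : Fintype.card Q ≤ J) {q : Q} (hq : q ∈ pdom δ (wpow v J)) :
    ∃ d, 1 ≤ d ∧ readWord δ q (wpow v d) = some q := by
  -- pigeonhole on the states reached by `v^0, …, v^J`; injectivity turns a repetition into a loop
  set f : ℕ → Q := fun i => (readWord δ q (wpow v i)).getD q
  have hf : ∀ i ≤ J, readWord δ q (wpow v i) = some (f i) := fun i hi => by
    obtain ⟨r, hr⟩ := Option.isSome_iff_exists.mp (pdom_wpow_antitone v hi hq)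
    simp [f, hr]
  have key : ∀ i j, i < j → j ≤ J → f i = f j → ∃ d, 1 ≤ d ∧ readWord δ q (wpow v d) = some q := by
    intro i j hij hj hfij
    have hread : readWord δ q (wpow v (j - i + i)) = some (f j) := by
      rw [Nat.sub_add_cancel hij.le]; exact hf j hj
    rw [readWord_wpow_add, Option.bind_eq_some_iff] at hread
    obtain ⟨s, hs, hsi⟩ := hread
    obtain rfl : s = q := hδ.eq_of_readWord_eq hsi (hfij ▸ hf i (by omega))
    exact ⟨j - i, by omega, hs⟩
  obtain ⟨i, j, hne, hfij⟩ :=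
    Fintype.exists_ne_map_eq_of_card_lt (fun i : Fin (J + 1) => f i) (by simpa using hJ)
  rcases lt_or_gt_of_ne (Fin.val_ne_of_ne hne) with hlt | hlt
  · exact key i j hlt (by omega) hfij
  · exact key j i hlt (by omega) hfij.symm

theorem pdom_wpow_eq_pim [Fintype Q] (hδ : IsInverse δ) (v : List (A × Bool)) {J : ℕ}
    (hJ : Fintype.card Q ≤ J) : pdom δ (wpow v J) = pim δ (wpow v J) := by
  ext q
  constructor
  · intro hq
    obtain ⟨d, hd, hloop⟩ := hδ.exists_loop_of_mem_pdom hJ hq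
    have hread := readWord_wpow_mul_of_loop hloop J
    have hdJ : d * J = (d - 1) * J + J := by
      rw [Nat.sub_one_mul, Nat.sub_add_cancel (Nat.le_mul_of_pos_left J hd)]
    rw [hdJ, readWord_wpow_add, Option.bind_eq_some_iff] at hread
    obtain ⟨p, -, hp⟩ := hread
    exact ⟨p, hp⟩
  · rintro ⟨p, hp⟩
    have hpdom : p ∈ pdom δ (wpow v J) := by simp [pdom, hp]
    obtain ⟨d, hd, hloop⟩ := hδ.exists_loop_of_mem_pdom hJ hpdom
    have h2J := mem_pdom_wpow_of_loop hd hloop (J + J)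
    simpa [pdom, readWord_wpow_add, hp] using h2J

end IsInverse

section Stallings

variable {A Q : Type}

/-- The group `H`-classes of `M(K)` consist of the `δ_w` with `dom δ_w = im δ_w`, and `x ^ k = 1`
holds there iff `δ_{w^k}` is the identity on that domain. -/
def SubgroupsInBurnside (δ : Q → A × Bool → Option Q) (k : ℕ) : Prop :=
  ∀ w : List (A × Bool), pdom δ w = pim δ w → ∀ q ∈ pdom δ w, readWord δ q (wpow w k) = some q

def LoopPowGcd (δ : Q → A × Bool → Option Q) (k : ℕ) : Prop :=
  ∀ (q : Q) (v : List (A × Bool)) (n : ℕ), 1 ≤ n →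
    readWord δ q (wpow v n) = some q → readWord δ q (wpow v (Nat.gcd k n)) = some q

def PowGcdMem (K : Subgroup (FreeGroup A)) (k : ℕ) : Prop :=
  ∀ (x : FreeGroup A) (n : ℕ), 1 ≤ n → x ^ n ∈ K → x ^ Nat.gcd k n ∈ K

def RecognizesReduced [DecidableEq A] (δ : Q → A × Bool → Option Q) (q₀ : Q)
    (K : Subgroup (FreeGroup A)) : Prop :=
  ∀ w : List (A × Bool), reduce w = w → (mk w ∈ K ↔ readWord δ q₀ w = some q₀)

theorem mk_conj_wpow (u v : List (A × Bool)) (m : ℕ) :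
    mk (u ++ wpow v m ++ invRev u) = mk (u ++ v ++ invRev u) ^ m := by
  rw [← mul_mk, ← mul_mk, ← inv_mk, wpow, ← pow_mk, ← mul_mk, ← mul_mk, ← inv_mk, conj_pow]

theorem toWord_pow_of_ne_zero [DecidableEq A] (x : FreeGroup A) {m : ℕ} (hm : m ≠ 0) :
    (x ^ m).toWord = reduceCyclically.conjugator x.toWord ++
      wpow (reduceCyclically x.toWord) m ++ invRev (reduceCyclically.conjugator x.toWord) := by
  rw [toWord_pow, reduceCyclically.reduce_flatten_replicate isReduced_toWord, if_neg hm]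
  rfl

variable {δ : Q → A × Bool → Option Q} {k : ℕ}

theorem IsInverse.loopPowGcd_of_subgroupsInBurnside [Fintype Q] (hδ : IsInverse δ)
    (h : SubgroupsInBurnside δ k) : LoopPowGcd δ k := by
  intro q v n hn hloop
  -- `J ≥ |Q|` puts `δ_{v^J}` in a group `H`-class; `J` coprime to `n` gives `gcd (J k) n = gcd k n`
  set J := n * Fintype.card Q + 1
  have hJ : Fintype.card Q ≤ J := (Nat.le_mul_of_pos_left _ hn).trans (Nat.le_succ _)
  have hJk : readWord δ q (wpow v (J * k)) = some q := by
    rw [wpow_mul]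
    exact h _ (hδ.pdom_wpow_eq_pim v hJ) q (mem_pdom_wpow_of_loop hn hloop J)
  have hcop : Nat.Coprime J n := (Nat.coprime_mul_left_add_left 1 n _).mpr (Nat.coprime_one_left n)
  rw [← hcop.gcd_mul_left_cancel k]
  exact readWord_wpow_gcd hJk hloop

theorem IsInverse.subgroupsInBurnside_of_loopPowGcd [Fintype Q] (hδ : IsInverse δ)
    (h : LoopPowGcd δ k) : SubgroupsInBurnside δ k := by
  intro w hw q hq
  obtain ⟨d, hd, hloop⟩ := hδ.exists_loop_of_mem_pdom le_rfl (pdom_subset_pdom_wpow hw _ hq)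
  obtain ⟨c, hc⟩ := Nat.gcd_dvd_left k d
  rw [hc, wpow_mul]
  exact readWord_wpow_of_loop (h q w d hd hloop) c

namespace RecognizesReduced

variable [DecidableEq A] {q₀ : Q} {K : Subgroup (FreeGroup A)}

theorem mem_of_readWord (hK : RecognizesReduced δ q₀ K) (hδ : IsInverse δ)
    {w : List (A × Bool)} (h : readWord δ q₀ w = some q₀) : mk w ∈ K := by
  rw [← reduce.self]
  exact (hK _ reduce.idem).mpr (hδ.readWord_of_red reduce.red h)

theorem readWord_toWord (hK : RecognizesReduced δ q₀ K) {x : FreeGroup A} (hx : x ∈ K) :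
    readWord δ q₀ x.toWord = some q₀ :=
  (hK _ (reduce_toWord x)).mp (by rwa [mk_toWord])

theorem eq_of_mk_conj_mem (hK : RecognizesReduced δ q₀ K) (hδ : IsInverse δ)
    {u w : List (A × Bool)} {q q' : Q} (hu : readWord δ q₀ u = some q)
    (hw : readWord δ q w = some q') (hmem : mk (u ++ w ++ invRev u) ∈ K) : q' = q := by
  have h₁ : readWord δ q₀ (u ++ w) = some q' := by
    rw [readWord_append, hu, Option.bind_some, hw]
  have h₂ : readWord δ q₀ ((mk (u ++ w ++ invRev u)).toWord ++ u) = some q := by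
    rw [readWord_append, hK.readWord_toWord hmem, Option.bind_some, hu]
  refine hδ.readWord_eq_of_mk_eq ?_ h₁ h₂
  rw [← mul_mk, ← mul_mk, mk_toWord, ← mul_mk, ← mul_mk, ← inv_mk]
  group

theorem powGcdMem_of_loopPowGcd (hK : RecognizesReduced δ q₀ K) (hδ : IsInverse δ)
    (h : LoopPowGcd δ k) : PowGcdMem K k := by
  intro x n hn hx
  have hxn := hK.readWord_toWord hx
  rw [toWord_pow_of_ne_zero x (by omega), hδ.readWord_conj_eq_self_iff] at hxn
  obtain ⟨p, hu, hy⟩ := hxn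
  rw [← mk_toWord (x := x ^ _), toWord_pow_of_ne_zero x (Nat.gcd_pos_of_pos_right k hn).ne']
  exact hK.mem_of_readWord hδ (hδ.readWord_conj_eq_self_iff.mpr ⟨p, hu, h p _ n hn hy⟩)

theorem loopPowGcd_of_powGcdMem (hK : RecognizesReduced δ q₀ K) (hδ : IsInverse δ)
    (hconn : ∀ q : Q, ∃ w : List (A × Bool), readWord δ q₀ w = some q)
    (h : PowGcdMem K k) : LoopPowGcd δ k := by
  intro q v n hn hloop
  obtain ⟨u, hu⟩ := hconn q
  have hxn : mk (u ++ v ++ invRev u) ^ n ∈ K := by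
    rw [← mk_conj_wpow]
    exact hK.mem_of_readWord hδ (hδ.readWord_conj_eq_self_iff.mpr ⟨q, hu, hloop⟩)
  have hxg := h _ n hn hxn
  rw [← mk_conj_wpow] at hxg
  obtain ⟨q', hq'⟩ := Option.isSome_iff_exists.mp (mem_pdom_wpow_of_loop hn hloop (Nat.gcd k n))
  rwa [hK.eq_of_mk_conj_mem hδ hu hq' hxg] at hq'

end RecognizesReduced

end Stallings

theorem stmt_10_general {A Q : Type} [DecidableEq A] [Fintype Q]
    (K : Subgroup (FreeGroup A)) (δ : Q → A × Bool → Option Q) (q₀ : Q)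
    (k : ℕ)
    (hinv : ∀ (p q : Q) (a : A) (b : Bool), δ p (a, b) = some q ↔ δ q (a, !b) = some p)
    (hconn : ∀ q : Q, ∃ w : List (A × Bool), readWord δ q₀ w = some q)
    (hlink : ∀ w : List (A × Bool), FreeGroup.reduce w = w →
      (FreeGroup.mk w ∈ K ↔ readWord δ q₀ w = some q₀)) :
    List.TFAE
      [∀ w : List (A × Bool), pdom δ w = pim δ w →
          ∀ q ∈ pdom δ w, readWord δ q (wpow w k) = some q,
       ∀ (q : Q) (v : List (A × Bool)) (n : ℕ), 1 ≤ n →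
          readWord δ q (wpow v n) = some q →
          readWord δ q (wpow v (Nat.gcd k n)) = some q,
       ∀ (x : FreeGroup A) (n : ℕ), 1 ≤ n →
          x ^ n ∈ K → x ^ Nat.gcd k n ∈ K] := by
  have hδ : IsInverse δ := hinv
  have hK : RecognizesReduced δ q₀ K := hlink
  tfae_have 1 ↔ 2 :=
    ⟨hδ.loopPowGcd_of_subgroupsInBurnside, hδ.subgroupsInBurnside_of_loopPowGcd⟩
  tfae_have 2 ↔ 3 := ⟨hK.powGcdMem_of_loopPowGcd hδ, hK.loopPowGcd_of_powGcdMem hδ hconn⟩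
  tfae_finish

/-- For the Stallings automaton `S(K) = (Q, A, δ, q₀)` of a f.g. subgroup
`K ≤ F_A` and `k ≥ 1`, the following are equivalent: (i) every group `H`-class of `M(K)`
satisfies `x^k = 1` (elements of group `H`-classes are exactly the `δ_w` with
`dom δ_w = im δ_w`, and `x^k = 1` there means `δ_{w^k}` fixes the domain pointwise);
(ii) for all `q`, `v`, `n ≥ 1`, if `v^n` labels a loop at `q` then so does `v^gcd(k,n)`;
(iii) for all `x ∈ F_A` and `n ≥ 1`, `x^n ∈ K` implies `x^gcd(k,n) ∈ K`. -/
theorem stmt_10 {A Q : Type} [DecidableEq A] [Fintype Q]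
    (K : Subgroup (FreeGroup A)) (δ : Q → A × Bool → Option Q) (q₀ : Q)
    (k : ℕ) (hk : 1 ≤ k)
    (hinv : ∀ (p q : Q) (a : A) (b : Bool), δ p (a, b) = some q ↔ δ q (a, !b) = some p)
    (hconn : ∀ q : Q, ∃ w : List (A × Bool), readWord δ q₀ w = some q)
    (hdeg : ∀ q : Q, q ≠ q₀ → 2 ≤ {x : A × Bool | (δ q x).isSome}.ncard)
    (hlink : ∀ w : List (A × Bool), FreeGroup.reduce w = w →
      (FreeGroup.mk w ∈ K ↔ readWord δ q₀ w = some q₀)) :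
    List.TFAE
      [∀ w : List (A × Bool), pdom δ w = pim δ w →
          ∀ q ∈ pdom δ w, readWord δ q (wpow w k) = some q,
       ∀ (q : Q) (v : List (A × Bool)) (n : ℕ), 1 ≤ n →
          readWord δ q (wpow v n) = some q →
          readWord δ q (wpow v (Nat.gcd k n)) = some q,
       ∀ (x : FreeGroup A) (n : ℕ), 1 ≤ n →
          x ^ n ∈ K → x ^ Nat.gcd k n ∈ K] :=
  stmt_10_general K δ q₀ k hinv hconn hlink
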